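/- arXiv:1303.7170 — 5 statements merged into one kernel-verified Lean document; each statement's English description precedes it below -/
import Mathlib

section
/- For any Riemannian metric g and symmetric 2-tensor h on a manifold of dimension n ≥ 4 (pointwise, at a fixed point), one has |h|²|Rc|² − (2R/(n−2))(H·R_{ij}h_{ij} − R_{jk}h_{ji}h_{ik}) + R²(H² − |h|²)/((n−1)(n−2)) ≥ 0, where H = g^{ij}h_{ij}, R is the scalar curvature, and all norms and traces are taken with respect to g. -/
/-!
Split `Rc` and `h` into traceless parts `E`, `e` plus multiples of the identity. With `N = n`,
`X = |E|²`, `Y = |e|²`, `u = ⟨E, e⟩` and `w = ⟨E, e²⟩` the quantity equals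
`(XH² - 2HRu + YR²)/N + (XY + YR²/(N(N-1)) + 2Rw/(N-2))`, and each bracket is nonnegative
by `2stu ≤ ps² + qt²`, valid whenever `p, q ≥ 0` and `u² ≤ pq`. For the first bracket,
`u² ≤ XY` is Cauchy–Schwarz. For the second, Cauchy–Schwarz against the traceless part of `e²`
reduces `N(N-1)w² ≤ (N-2)²XY²` to the sharp power-sum inequality
`N(N-1) Σ λᵢ⁴ ≤ (N² - 3N + 3)(Σ λᵢ²)²` for the eigenvalues of `e`, which sum to zero.
-/

open Finset Matrix

section PowerSums

variable {ι : Type*} [Fintype ι] {x : ι → ℝ}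

theorem sq_add_le_of_sum_eq_zero (hx : ∑ k, x k = 0) {i j : ι} (hij : i ≠ j) :
    (x i + x j) ^ 2 ≤ (Fintype.card ι - 2) * (∑ k, x k ^ 2 - x i ^ 2 - x j ^ 2) := by
  classical
  have hsum : ∑ k ∈ univ \ {i, j}, x k = -(x i + x j) := by
    rw [sum_sdiff_eq_sub (subset_univ _), sum_pair hij, hx]; ring
  have hsum_sq : ∑ k ∈ univ \ {i, j}, x k ^ 2 = ∑ k, x k ^ 2 - x i ^ 2 - x j ^ 2 := by
    rw [sum_sdiff_eq_sub (subset_univ _), sum_pair hij]; ring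
  have hcard : (#(univ \ {i, j}) : ℝ) = Fintype.card ι - 2 := by
    have h2 : 2 ≤ Fintype.card ι := by
      simpa [card_pair hij] using card_le_univ ({i, j} : Finset ι)
    rw [card_sdiff_of_subset (subset_univ _), card_univ, card_pair hij, Nat.cast_sub h2]
    norm_num
  have hcs := sq_sum_le_card_mul_sum_sq (s := univ \ {i, j}) (f := x)
  rwa [hsum, hsum_sq, hcard, neg_sq] at hcs

/-- Equality holds for `x = (n - 1, -1, …, -1)`. -/
theorem card_mul_sum_pow_four_le_of_sum_eq_zero (hx : ∑ i, x i = 0) :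
    Fintype.card ι * (Fintype.card ι - 1) * ∑ i, x i ^ 4
      ≤ ((Fintype.card ι : ℝ) ^ 2 - 3 * Fintype.card ι + 3) * (∑ i, x i ^ 2) ^ 2 := by
  set N : ℝ := (Fintype.card ι : ℝ)
  set p₂ := ∑ i, x i ^ 2
  set p₄ := ∑ i, x i ^ 4
  -- weight the pairwise bound `sq_add_le_of_sum_eq_zero` by `(x i - x j) ^ 2` and sum
  have hterm : ∀ i j,
      0 ≤ (x i - x j) ^ 2 * ((N - 2) * (p₂ - x i ^ 2 - x j ^ 2) - (x i + x j) ^ 2) := by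
    intro i j
    rcases eq_or_ne i j with rfl | hij
    · simp
    · exact mul_nonneg (sq_nonneg _) (sub_nonneg.2 (sq_add_le_of_sum_eq_zero hx hij))
  have hexpand : ∀ i j,
      (x i - x j) ^ 2 * ((N - 2) * (p₂ - x i ^ 2 - x j ^ 2) - (x i + x j) ^ 2)
        = (N - 2) * (p₂ * x i ^ 2 + p₂ * x j ^ 2 - 2 * p₂ * (x i * x j)
            - (x i ^ 4 + x j ^ 4 + 2 * (x i ^ 2 * x j ^ 2)
              - 2 * (x i ^ 3 * x j) - 2 * (x i * x j ^ 3)))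
          - (x i ^ 4 - 2 * (x i ^ 2 * x j ^ 2) + x j ^ 4) := by
    intro i j; ring
  have hsum :
      ∑ i, ∑ j, (x i - x j) ^ 2 * ((N - 2) * (p₂ - x i ^ 2 - x j ^ 2) - (x i + x j) ^ 2)
        = 2 * ((N ^ 2 - 3 * N + 3) * p₂ ^ 2 - N * (N - 1) * p₄) := by
    simp only [hexpand, sum_add_distrib, sum_sub_distrib, ← mul_sum, ← sum_mul, sum_const,
      card_univ, nsmul_eq_mul, hx]
    ring
  have := sum_nonneg fun i (_ : i ∈ univ) => sum_nonneg fun j (_ : j ∈ univ) => hterm i j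
  linarith

end PowerSums

namespace Matrix

variable {ι : Type*} [Fintype ι]

theorem IsHermitian.trace_pow_eq_sum_eigenvalues_pow {𝕜 : Type*} [RCLike 𝕜] [DecidableEq ι]
    {A : Matrix ι ι 𝕜} (hA : A.IsHermitian) (k : ℕ) :
    (A ^ k).trace = ∑ i, (hA.eigenvalues i : 𝕜) ^ k := by
  conv_lhs => rw [hA.spectral_theorem, ← map_pow, Unitary.conjStarAlgAut_apply, trace_mul_cycle,
    Unitary.coe_star_mul_self, Matrix.one_mul, diagonal_pow, trace_diagonal]
  simp

theorem trace_mul_eq_sum_mul_apply_of_isSymm {A B : Matrix ι ι ℝ} (hB : B.IsSymm) :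
    (A * B).trace = ∑ p : ι × ι, A p.1 p.2 * B p.1 p.2 := by
  simp only [trace, mul_apply, diag, Fintype.sum_prod_type, hB.apply]

theorem IsSymm.trace_mul_self_nonneg {A : Matrix ι ι ℝ} (hA : A.IsSymm) :
    0 ≤ (A * A).trace := by
  rw [trace_mul_eq_sum_mul_apply_of_isSymm hA]
  exact sum_nonneg fun p _ => mul_self_nonneg _

theorem IsSymm.sq_trace_mul_le {A B : Matrix ι ι ℝ} (hA : A.IsSymm) (hB : B.IsSymm) :
    (A * B).trace ^ 2 ≤ (A * A).trace * (B * B).trace := by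
  simp only [trace_mul_eq_sum_mul_apply_of_isSymm hA, trace_mul_eq_sum_mul_apply_of_isSymm hB,
    ← sq]
  exact sum_mul_sq_le_sq_mul_sq _ _ _

variable [DecidableEq ι]

theorem IsSymm.card_mul_trace_pow_four_le {A : Matrix ι ι ℝ} (hA : A.IsSymm)
    (h0 : A.trace = 0) :
    Fintype.card ι * (Fintype.card ι - 1) * (A ^ 4).trace
      ≤ ((Fintype.card ι : ℝ) ^ 2 - 3 * Fintype.card ι + 3) * (A ^ 2).trace ^ 2 := by
  have hH : A.IsHermitian := isHermitian_iff_isSymm.2 hA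
  have h1 := hH.trace_pow_eq_sum_eigenvalues_pow 1
  rw [pow_one, h0] at h1
  simp only [hH.trace_pow_eq_sum_eigenvalues_pow, RCLike.ofReal_real_eq_id, id, pow_one] at h1 ⊢
  exact card_mul_sum_pow_four_le_of_sum_eq_zero h1.symm

noncomputable def traceless (A : Matrix ι ι ℝ) : Matrix ι ι ℝ :=
  A - (A.trace / Fintype.card ι) • 1

theorem trace_traceless (A : Matrix ι ι ℝ) : (traceless A).trace = 0 := by
  rcases isEmpty_or_nonempty ι with hι | hι
  · simp [trace]
  · simp [traceless, trace_sub, trace_smul, trace_one]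

theorem isSymm_traceless {A : Matrix ι ι ℝ} (hA : A.IsSymm) : (traceless A).IsSymm :=
  hA.sub (isSymm_one.smul _)

theorem trace_traceless_mul_traceless (A B : Matrix ι ι ℝ) :
    (traceless A * traceless B).trace = (A * B).trace - A.trace * B.trace / Fintype.card ι := by
  rcases isEmpty_or_nonempty ι with hι | hι
  · simp [trace]
  · simp only [traceless, sub_mul, mul_sub, Matrix.smul_mul, Matrix.mul_smul, Matrix.one_mul,
      Matrix.mul_one, trace_sub, trace_smul, trace_one, smul_eq_mul, smul_smul]
    field_simp
    ring

theorem trace_mul_traceless_of_trace_eq_zero {A : Matrix ι ι ℝ} (hA : A.trace = 0)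
    (B : Matrix ι ι ℝ) : (A * traceless B).trace = (A * B).trace := by
  simp [traceless, mul_sub, trace_sub, hA]

theorem IsSymm.card_mul_trace_traceless_sq_le {A : Matrix ι ι ℝ} (hA : A.IsSymm)
    (h0 : A.trace = 0) :
    Fintype.card ι * (Fintype.card ι - 1) * (traceless (A * A) * traceless (A * A)).trace
      ≤ ((Fintype.card ι : ℝ) - 2) ^ 2 * (A * A).trace ^ 2 := by
  have h4 := hA.card_mul_trace_pow_four_le h0
  rw [show A ^ 4 = A * A * (A * A) by noncomm_ring, sq A] at h4
  rw [trace_traceless_mul_traceless]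
  set N : ℝ := (Fintype.card ι : ℝ)
  rcases eq_or_ne N 0 with hN | hN
  · rw [hN, zero_mul, zero_mul]; positivity
  · have : N * (N - 1) * ((A * A * (A * A)).trace - (A * A).trace * (A * A).trace / N)
        = N * (N - 1) * (A * A * (A * A)).trace - (N - 1) * (A * A).trace ^ 2 := by
      field_simp
    linarith

theorem IsSymm.card_mul_sq_trace_mul_mul_self_le {E e : Matrix ι ι ℝ} (hE : E.IsSymm)
    (he : e.IsSymm) (hE0 : E.trace = 0) (he0 : e.trace = 0) :
    Fintype.card ι * (Fintype.card ι - 1) * (E * (e * e)).trace ^ 2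
      ≤ ((Fintype.card ι : ℝ) - 2) ^ 2 * (E * E).trace * (e * e).trace ^ 2 := by
  have hee : (e * e).IsSymm := by simpa [sq] using he.pow 2
  have hcs := hE.sq_trace_mul_le (isSymm_traceless hee)
  rw [trace_mul_traceless_of_trace_eq_zero hE0] at hcs
  have hM := he.card_mul_trace_traceless_sq_le he0
  have hN : (0 : ℝ) ≤ Fintype.card ι * (Fintype.card ι - 1) := by
    rcases isEmpty_or_nonempty ι with hι | hι
    · simp
    · nlinarith [(Nat.one_le_cast (α := ℝ)).2 (Fintype.card_pos (α := ι))]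
  calc _ ≤ Fintype.card ι * (Fintype.card ι - 1) * ((E * E).trace
          * (traceless (e * e) * traceless (e * e)).trace) := by gcongr
    _ ≤ _ := by nlinarith [hE.trace_mul_self_nonneg]

theorem pinching_expr_eq_traceless (A B : Matrix ι ι ℝ) (hN : 2 < (Fintype.card ι : ℝ)) :
    (B * B).trace * (A * A).trace
      - 2 * A.trace / (Fintype.card ι - 2) * (B.trace * (A * B).trace - (A * B * B).trace)
      + A.trace ^ 2 * (B.trace ^ 2 - (B * B).trace)
        / ((Fintype.card ι - 1) * (Fintype.card ι - 2))
    = ((traceless B * traceless B).trace + B.trace ^ 2 / Fintype.card ι)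
        * (traceless A * traceless A).trace
      - 2 * A.trace * B.trace / Fintype.card ι * (traceless A * traceless B).trace
      + 2 * A.trace / (Fintype.card ι - 2) * (traceless A * (traceless B * traceless B)).trace
      + A.trace ^ 2 * (traceless B * traceless B).trace / (Fintype.card ι - 1) := by
  have hN0 : (Fintype.card ι : ℝ) ≠ 0 := by positivity
  have hN1 : (Fintype.card ι : ℝ) - 1 ≠ 0 := by linarith
  have hN2 : (Fintype.card ι : ℝ) - 2 ≠ 0 := by linarith
  simp only [traceless, sub_mul, mul_sub, Matrix.smul_mul, Matrix.mul_smul, Matrix.one_mul,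
    Matrix.mul_one, trace_sub, trace_smul, trace_one, smul_eq_mul, smul_smul, Matrix.mul_assoc]
  field_simp
  ring

end Matrix

theorem two_mul_mul_mul_le_of_sq_le_mul {p q u : ℝ} (hp : 0 ≤ p) (hq : 0 ≤ q)
    (hu : u ^ 2 ≤ p * q) (s t : ℝ) : 2 * s * t * u ≤ p * s ^ 2 + q * t ^ 2 := by
  refine le_of_sq_le_sq ?_ (by positivity)
  nlinarith [sq_nonneg (p * s ^ 2 - q * t ^ 2),
    mul_le_mul_of_nonneg_left hu (sq_nonneg (2 * s * t))]

theorem pinching_expr_nonneg_of_bounds {N X Y u w R H : ℝ} (hN : 2 < N) (hX : 0 ≤ X)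
    (hY : 0 ≤ Y) (hu : u ^ 2 ≤ X * Y) (hw : N * (N - 1) * w ^ 2 ≤ (N - 2) ^ 2 * X * Y ^ 2) :
    0 ≤ (Y + H ^ 2 / N) * X - 2 * R * H / N * u + 2 * R / (N - 2) * w + R ^ 2 * Y / (N - 1) := by
  have hN0 : 0 < N := by linarith
  have hN1 : 0 < N - 1 := by linarith
  have hN2 : 0 < N - 2 := by linarith
  have hw' : (-w / (N - 2)) ^ 2 ≤ X * Y * (Y / (N * (N - 1))) := by
    rw [div_pow, neg_sq, div_le_iff₀ (by positivity)]
    field_simp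
    linarith
  have h₁ := two_mul_mul_mul_le_of_sq_le_mul hX hY hu H R
  have h₂ : -(2 * R * w / (N - 2)) ≤ X * Y + Y / (N * (N - 1)) * R ^ 2 := by
    convert two_mul_mul_mul_le_of_sq_le_mul (mul_nonneg hX hY) (by positivity) hw' 1 R using 1
      <;> ring
  have hsplit :
      (Y + H ^ 2 / N) * X - 2 * R * H / N * u + 2 * R / (N - 2) * w + R ^ 2 * Y / (N - 1)
        = (X * H ^ 2 + Y * R ^ 2 - 2 * H * R * u) / N
          + (X * Y + Y / (N * (N - 1)) * R ^ 2 + 2 * R * w / (N - 2)) := by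
    field_simp
    ring
  rw [hsplit]
  exact add_nonneg (div_nonneg (by linarith) hN0.le) (by linarith)

/-- Pointwise pinching inequality (in an orthonormal basis for `g`):
for symmetric `Rc` and `h` on ℝⁿ, `n ≥ 4`,
`|h|²|Rc|² − (2R/(n−2))(H·⟨Rc,h⟩ − tr(Rc·h·h)) + R²(H²−|h|²)/((n−1)(n−2)) ≥ 0`. -/
theorem stmt_0 (n : ℕ) (hn : 4 ≤ n)
    (Rc h : Matrix (Fin n) (Fin n) ℝ)
    (hRc : Rc.IsSymm) (hh : h.IsSymm) :
    0 ≤ (h * h).trace * (Rc * Rc).trace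
      - 2 * Rc.trace / ((n : ℝ) - 2) *
          (h.trace * (Rc * h).trace - (Rc * h * h).trace)
      + Rc.trace ^ 2 * (h.trace ^ 2 - (h * h).trace) /
          (((n : ℝ) - 1) * ((n : ℝ) - 2)) := by
  have hN : 2 < (Fintype.card (Fin n) : ℝ) := by
    rw [Fintype.card_fin]; exact_mod_cast (by omega : 2 < n)
  have hE := isSymm_traceless hRc
  have he := isSymm_traceless hh
  have key := pinching_expr_nonneg_of_bounds (R := Rc.trace) (H := h.trace) hN
    hE.trace_mul_self_nonneg he.trace_mul_self_nonneg (hE.sq_trace_mul_le he)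
    (hE.card_mul_sq_trace_mul_mul_self_le he (trace_traceless Rc) (trace_traceless h))
  rwa [← pinching_expr_eq_traceless Rc h hN, Fintype.card_fin] at key
end

section
/- Let n ≥ 3, let h₁,…,hₙ and r₁,…,rₙ be real numbers, and set s_k = Σᵢ hᵢᵏ. Then Q := (Σ rᵢ²)(Σ hᵢ²) + (2/(n−2))(Σ rᵢ)(−(Σ hᵢ)(Σ rᵢhᵢ) + Σ rᵢhᵢ²) + (1/((n−1)(n−2)))(Σ rᵢ)²((Σ hᵢ)² − Σ hᵢ²) ≥ 0. -/
/-!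
Split `r` into its mean and its centred part `u`. Then `Q` is a quadratic polynomial in
`R = ∑ rᵢ`, namely `p/(n-1) R² + 2⟨u, w⟩/(n-2) R + (∑ hᵢ²) ‖u‖²`, where `p = ‖h - mean h‖²` and
`w` is the centred part of `hᵢ² - hᵢ ∑ hⱼ`. By Cauchy–Schwarz its discriminant is nonpositive
as soon as `(n-1)‖w‖² ≤ (n-2)² p ∑ hᵢ²`. Writing `h = x + m` with `∑ xᵢ = 0`, this is in turn
the nonnegativity of a quadratic polynomial in `m`, whose discriminant is controlled, again by
Cauchy–Schwarz, by the fourth moment bound `n(n-1)‖x² - mean(x²)‖² ≤ (n-2)²‖x‖⁴` for centred `x`.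
That bound says that the sum of the squared entries of a suitable symmetric matrix `F`, quadratic
in `x`, dominates the sum of its squared diagonal entries.
-/

open Fintype

lemma quadratic_nonneg_of_sq_le_mul {a b c : ℝ} (ha : 0 ≤ a) (hc : 0 ≤ c) (hb : b ^ 2 ≤ a * c)
    (t : ℝ) : 0 ≤ a * t ^ 2 + 2 * b * t + c := by
  rcases ha.eq_or_lt with rfl | ha
  · have hb0 : b = 0 := by nlinarith [sq_nonneg b]
    simpa [hb0] using hc
  · refine nonneg_of_mul_nonneg_right ?_ ha
    nlinarith [sq_nonneg (a * t + b)]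

section
variable {ι : Type*} [Fintype ι]

noncomputable def center (v : ι → ℝ) : ι → ℝ := fun i => v i - (∑ j, v j) / card ι

lemma sum_center [Nonempty ι] (v : ι → ℝ) : ∑ i, center v i = 0 := by
  have : (card ι : ℝ) ≠ 0 := by exact_mod_cast card_ne_zero
  simp [center, Finset.sum_sub_distrib, Finset.card_univ, mul_div_cancel₀ _ this]

lemma sum_mul_eq_sum_center_mul_center [Nonempty ι] (a b : ι → ℝ) :
    ∑ i, a i * b i = ∑ i, center a i * center b i + (∑ i, a i) * (∑ i, b i) / card ι := by
  have : (card ι : ℝ) ≠ 0 := by exact_mod_cast card_ne_zero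
  simp only [center, mul_sub, sub_mul, Finset.sum_sub_distrib, ← Finset.mul_sum, ← Finset.sum_mul,
    Finset.sum_const, Finset.card_univ, nsmul_eq_mul]
  field_simp
  ring

lemma sum_sq_eq_sum_center_sq [Nonempty ι] (a : ι → ℝ) :
    ∑ i, a i ^ 2 = ∑ i, center a i ^ 2 + (∑ i, a i) ^ 2 / card ι := by
  simpa only [← sq] using sum_mul_eq_sum_center_mul_center a a

variable {x y : ι → ℝ}

lemma sum_sq_add_add_of_sum_eq_zero (hx : ∑ i, x i = 0) (hy : ∑ i, y i = 0) (α β γ : ℝ) :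
    ∑ i, (α * x i + β * y i + γ) ^ 2 =
      α ^ 2 * ∑ i, x i ^ 2 + 2 * α * β * ∑ i, x i * y i + β ^ 2 * ∑ i, y i ^ 2
        + card ι * γ ^ 2 := by
  have e : ∀ i, (α * x i + β * y i + γ) ^ 2 = α ^ 2 * x i ^ 2 + 2 * α * β * (x i * y i)
      + β ^ 2 * y i ^ 2 + 2 * α * γ * x i + 2 * β * γ * y i + γ ^ 2 := fun i => by ring
  simp only [e, Finset.sum_add_distrib, ← Finset.mul_sum, hx, hy, Finset.sum_const,
    Finset.card_univ, nsmul_eq_mul]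
  ring

lemma sum_sum_sq_of_sum_eq_zero (hx : ∑ i, x i = 0) (hy : ∑ i, y i = 0) (α β γ : ℝ) :
    ∑ i, ∑ j, (α * (x i * x j) + β * (y i + y j) + γ) ^ 2 =
      α ^ 2 * (∑ i, x i ^ 2) ^ 2 + 2 * card ι * β ^ 2 * ∑ i, y i ^ 2
        + card ι ^ 2 * γ ^ 2 := by
  have row : ∀ i, ∑ j, (α * (x i * x j) + β * (y i + y j) + γ) ^ 2
      = (α * x i) ^ 2 * ∑ j, x j ^ 2 + 2 * (α * x i) * β * ∑ j, x j * y j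
        + β ^ 2 * ∑ j, y j ^ 2 + card ι * (β * y i + γ) ^ 2 := fun i => by
    rw [← sum_sq_add_add_of_sum_eq_zero hx hy]
    exact Finset.sum_congr rfl fun j _ => by ring
  have col : ∑ i, (β * y i + γ) ^ 2 = β ^ 2 * ∑ i, y i ^ 2 + card ι * γ ^ 2 := by
    simpa using sum_sq_add_add_of_sum_eq_zero hx hy 0 β γ
  simp only [row, Finset.sum_add_distrib, ← Finset.sum_mul, ← Finset.mul_sum, mul_pow, col, hx,
    Finset.sum_const, Finset.card_univ, nsmul_eq_mul]
  ring

lemma card_mul_sum_center_sq_sq_le (hn : 3 ≤ card ι) (hx : ∑ i, x i = 0) :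
    card ι * (card ι - 1) * ∑ i, center (fun j => x j ^ 2) i ^ 2
      ≤ (card ι - 2) ^ 2 * (∑ i, x i ^ 2) ^ 2 := by
  have : Nonempty ι := card_pos_iff.mp (by omega)
  have hN : (3 : ℝ) ≤ card ι := by exact_mod_cast hn
  set N : ℝ := (card ι : ℝ) with hN_def
  set p := ∑ i, x i ^ 2
  set y := center fun j => x j ^ 2
  have hy : ∑ i, y i = 0 := sum_center _
  -- At the extremal vector `x = (n-1, -1, …, -1)` every off-diagonal entry of `F` vanishes.
  let F i j := (N - 1) * (N - 2) * (x i * x j) + (N - 1) * (y i + y j) + (N - 2) * p / N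
  have hdiag : ∀ i, F i i = 0 * x i + N * (N - 1) * y i + (N - 2) * p := fun i => by
    simp only [F, y, center, ← hN_def]
    field_simp
    ring
  have hle : ∑ i, F i i ^ 2 ≤ ∑ i, ∑ j, F i j ^ 2 := Finset.sum_le_sum fun i _ =>
    Finset.single_le_sum (f := fun j => F i j ^ 2) (fun j _ => sq_nonneg _) (Finset.mem_univ i)
  rw [Finset.sum_congr rfl fun i _ => by rw [hdiag], sum_sq_add_add_of_sum_eq_zero hx hy,
    sum_sum_sq_of_sum_eq_zero hx hy, ← hN_def] at hle
  have hγ : N ^ 2 * ((N - 2) * p / N) ^ 2 = (N - 2) ^ 2 * p ^ 2 := by field_simp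
  have hfac : 0 < (N - 1) * (N - 2) := by nlinarith
  refine sub_nonneg.mp (nonneg_of_mul_nonneg_right ?_ hfac)
  linear_combination hle + hγ

lemma card_sub_one_mul_sum_sq_le_of_sum_eq_zero (hn : 3 ≤ card ι) (hx : ∑ i, x i = 0) (m : ℝ) :
    (card ι - 1) * ∑ i, (center (fun j => x j ^ 2) i - (card ι - 2) * m * x i) ^ 2
      ≤ (card ι - 2) ^ 2 * (∑ i, x i ^ 2) * (∑ i, x i ^ 2 + card ι * m ^ 2) := by
  have : Nonempty ι := card_pos_iff.mp (by omega)
  have hN : (3 : ℝ) ≤ card ι := by exact_mod_cast hn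
  have hY := card_mul_sum_center_sq_sq_le hn hx
  set N : ℝ := (card ι : ℝ)
  set p := ∑ i, x i ^ 2
  set y := center fun j => x j ^ 2
  have hy : ∑ i, y i = 0 := sum_center _
  have hCS : (∑ i, x i * y i) ^ 2 ≤ p * ∑ i, y i ^ 2 := Finset.sum_mul_sq_le_sq_mul_sq _ _ _
  have hp : 0 ≤ p := Finset.sum_nonneg fun i _ => sq_nonneg _
  have hY0 : 0 ≤ ∑ i, y i ^ 2 := Finset.sum_nonneg fun i _ => sq_nonneg _
  have hb : ((N - 1) * (N - 2) * ∑ i, x i * y i) ^ 2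
      ≤ (N - 2) ^ 2 * p * ((N - 2) ^ 2 * p ^ 2 - (N - 1) * ∑ i, y i ^ 2) := by
    nlinarith [mul_le_mul_of_nonneg_left hCS (sq_nonneg ((N - 1) * (N - 2))),
      mul_le_mul_of_nonneg_left hY (mul_nonneg (sq_nonneg (N - 2)) hp)]
  have hq := quadratic_nonneg_of_sq_le_mul (by positivity) (by nlinarith) hb m
  have hw : ∑ i, (y i - (N - 2) * m * x i) ^ 2 = ∑ i, (-((N - 2) * m) * x i + 1 * y i + 0) ^ 2 :=
    Finset.sum_congr rfl fun i _ => by ring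
  rw [hw, sum_sq_add_add_of_sum_eq_zero hx hy]
  linear_combination hq

lemma card_sub_one_mul_sum_center_sq_le (hn : 3 ≤ card ι) (h : ι → ℝ) :
    (card ι - 1) * ∑ i, center (fun j => h j ^ 2 - h j * ∑ k, h k) i ^ 2
      ≤ (card ι - 2) ^ 2 * (∑ i, center h i ^ 2) * ∑ i, h i ^ 2 := by
  have : Nonempty ι := card_pos_iff.mp (by omega)
  have hh2 := sum_sq_eq_sum_center_sq h
  have hv : ∑ i, (h i ^ 2 - h i * ∑ k, h k) = ∑ i, h i ^ 2 - (∑ i, h i) ^ 2 := by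
    rw [Finset.sum_sub_distrib, ← Finset.sum_mul, sq]
  have hx2 : ∑ j, (h j - (∑ k, h k) / card ι) ^ 2 = ∑ i, h i ^ 2 - (∑ i, h i) ^ 2 / card ι := by
    rw [hh2]
    simp only [center]
    ring
  have hw : ∀ i, center (fun j => h j ^ 2 - h j * ∑ k, h k) i
      = center (fun j => center h j ^ 2) i - (card ι - 2) * ((∑ k, h k) / card ι) * center h i := by
    intro i
    simp only [center, hv, hx2]
    field_simp
    ring
  simp only [hw]
  convert card_sub_one_mul_sum_sq_le_of_sum_eq_zero hn (sum_center h) ((∑ k, h k) / card ι) using 2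
  rw [hh2]
  field_simp

end

noncomputable def Q {n : ℕ} (h r : Fin n → ℝ) : ℝ :=
  (∑ i, (r i) ^ 2) * (∑ i, (h i) ^ 2)
      + 2 / ((n : ℝ) - 2) * (∑ i, r i) *
          (-(∑ i, h i) * (∑ i, r i * h i) + ∑ i, r i * (h i) ^ 2)
      + 1 / (((n : ℝ) - 1) * ((n : ℝ) - 2)) * (∑ i, r i) ^ 2 *
          ((∑ i, h i) ^ 2 - ∑ i, (h i) ^ 2)

lemma Q_eq_quadratic {n : ℕ} (hn : 3 ≤ n) (h r : Fin n → ℝ) :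
    Q h r = (∑ i, center h i ^ 2) / (n - 1) * (∑ i, r i) ^ 2
      + 2 * ((∑ i, center r i * center (fun j => h j ^ 2 - h j * ∑ k, h k) i) / (n - 2))
          * ∑ i, r i
      + (∑ i, h i ^ 2) * ∑ i, center r i ^ 2 := by
  have : Nonempty (Fin n) := ⟨⟨0, by omega⟩⟩
  have hN : (3 : ℝ) ≤ n := by exact_mod_cast hn
  have h1 : (n : ℝ) - 1 ≠ 0 := by linarith
  have h2 : (n : ℝ) - 2 ≠ 0 := by linarith
  set v := fun j => h j ^ 2 - h j * ∑ k, h k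
  have hrv : ∑ i, r i * v i = -(∑ i, h i) * (∑ i, r i * h i) + ∑ i, r i * h i ^ 2 := by
    simp only [v, mul_sub, Finset.sum_sub_distrib, ← mul_assoc, ← Finset.sum_mul]
    ring
  have hv : ∑ i, v i = ∑ i, h i ^ 2 - (∑ i, h i) ^ 2 := by
    rw [Finset.sum_sub_distrib, ← Finset.sum_mul, sq]
  have hcov := sum_mul_eq_sum_center_mul_center r v
  have hr2 := sum_sq_eq_sum_center_sq r
  have hh2 := sum_sq_eq_sum_center_sq h
  simp only [card_fin] at hcov hr2 hh2
  rw [Q, ← hrv, hcov, hv, hr2, eq_sub_of_add_eq hh2.symm]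
  field_simp
  ring

/-- Nonnegativity of the degree-4 polynomial `Q` in `2n` variables. -/
theorem stmt_1 (n : ℕ) (hn : 3 ≤ n) (h r : Fin n → ℝ) :
    0 ≤ (∑ i, (r i) ^ 2) * (∑ i, (h i) ^ 2)
      + 2 / ((n : ℝ) - 2) * (∑ i, r i) *
          (-(∑ i, h i) * (∑ i, r i * h i) + ∑ i, r i * (h i) ^ 2)
      + 1 / (((n : ℝ) - 1) * ((n : ℝ) - 2)) * (∑ i, r i) ^ 2 *
          ((∑ i, h i) ^ 2 - ∑ i, (h i) ^ 2) := by
  have hN : (3 : ℝ) ≤ n := by exact_mod_cast hn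
  have hkey := card_sub_one_mul_sum_center_sq_le (ι := Fin n) (by simpa using hn) h
  rw [card_fin] at hkey
  have hCS := Finset.sum_mul_sq_le_sq_mul_sq Finset.univ (center r)
    (center fun j => h j ^ 2 - h j * ∑ k, h k)
  have hU : 0 ≤ ∑ i, center r i ^ 2 := Finset.sum_nonneg fun i _ => sq_nonneg _
  change 0 ≤ Q h r
  rw [Q_eq_quadratic hn]
  refine quadratic_nonneg_of_sq_le_mul
    (div_nonneg (Finset.sum_nonneg fun i _ => sq_nonneg _) (by linarith)) (by positivity) ?_ _
  rw [div_pow, div_mul_eq_mul_div, div_le_div_iff₀ (by nlinarith) (by linarith)]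
  nlinarith [mul_le_mul_of_nonneg_left hCS (by linarith : (0 : ℝ) ≤ n - 1),
    mul_le_mul_of_nonneg_left hkey hU]
end

section
/- Let n ≥ 3, h₁,…,hₙ ∈ ℝ, s_k = Σᵢ hᵢᵏ for k = 1,…,4, α₀ = (1,…,1)ᵀ, α₁ = (hᵢ)ᵀ, α₂ = (hᵢ²)ᵀ, and β = (s₁² − s₂)α₀/(2(n−1)(n−2)) − s₁α₁/(n−2) + α₂/(n−2). Then (s₂ + α₀ᵀβ)² − n βᵀβ ≥ 0. -/
/-!
Write `D(x) = ∑ᵢ ∑ⱼ (xᵢ - xⱼ)² = 2(n ∑ xᵢ² - (∑ xᵢ)²)`. Since `∑ β = (s₂ - s₁²) / (2(n - 1))`,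
the claim is equivalent to `(n - 1) D(β) ≤ s₂ D(h)`. The differences of `β` are
`(n - 2)(βᵢ - βⱼ) = (hᵢ - hⱼ)(hᵢ + hⱼ - s₁)`, and `hᵢ + hⱼ - s₁` is minus the sum of the other
`n - 2` values, so by Cauchy–Schwarz its square is at most `(n - 2)(s₂ - hᵢ² - hⱼ²)`. What remains,
`s₂ D(h) ≤ (n - 1) ∑ᵢ ∑ⱼ (hᵢ - hⱼ)²(hᵢ² + hⱼ²)`, is the nonnegativity of a sum over triples of
distinct indices of `(hᵢ - hⱼ)²(hᵢ² + hⱼ² - hₖ²)`; symmetrised over each triple `(a, b, c)` this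
becomes the sum of squares `∑ ((a - b)(a + b - c))²`.
-/

open Finset

theorem cyclic_sq_sub_mul_sq_add_sq_sub_sq_nonneg (a b c : ℝ) :
    0 ≤ (a - b) ^ 2 * (a ^ 2 + b ^ 2 - c ^ 2) + (a - c) ^ 2 * (a ^ 2 + c ^ 2 - b ^ 2)
      + (b - c) ^ 2 * (b ^ 2 + c ^ 2 - a ^ 2) := by
  have hsos : (a - b) ^ 2 * (a ^ 2 + b ^ 2 - c ^ 2) + (a - c) ^ 2 * (a ^ 2 + c ^ 2 - b ^ 2)
      + (b - c) ^ 2 * (b ^ 2 + c ^ 2 - a ^ 2)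
      = ((a - b) * (a + b - c)) ^ 2 + ((a - c) * (a + c - b)) ^ 2
        + ((b - c) * (b + c - a)) ^ 2 := by ring
  rw [hsos]
  positivity

section

variable {ι : Type*} [Fintype ι]

theorem sum_sum_sum_nonneg_of_cyclic (T : ι → ι → ι → ℝ)
    (hT : ∀ i j k, 0 ≤ T i j k + T i k j + T j k i) : 0 ≤ ∑ i, ∑ j, ∑ k, T i j k := by
  have hswap : ∑ i, ∑ j, ∑ k, T i k j = ∑ i, ∑ j, ∑ k, T i j k :=
    sum_congr rfl fun _ _ => sum_comm
  have hrotate : ∑ i, ∑ j, ∑ k, T j k i = ∑ i, ∑ j, ∑ k, T i j k := by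
    rw [sum_comm]
    exact sum_congr rfl fun _ _ => sum_comm
  have hsym : 0 ≤ ∑ i, ∑ j, ∑ k, (T i j k + T i k j + T j k i) :=
    sum_nonneg fun i _ => sum_nonneg fun j _ => sum_nonneg fun k _ => hT i j k
  simp only [sum_add_distrib, hswap, hrotate] at hsym
  linarith

theorem sum_sum_sub_sq (f : ι → ℝ) :
    ∑ i, ∑ j, (f i - f j) ^ 2 = 2 * (Fintype.card ι * ∑ i, f i ^ 2) - 2 * (∑ i, f i) ^ 2 := by
  simp only [sub_sq, sum_add_distrib, sum_sub_distrib, sum_const, card_univ, nsmul_eq_mul,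
    ← mul_sum, ← sum_mul]
  ring

theorem sq_sum_sub_sub_le {i j : ι} (hij : i ≠ j) (f : ι → ℝ) :
    (∑ k, f k - f i - f j) ^ 2
      ≤ (Fintype.card ι - 2) * (∑ k, f k ^ 2 - f i ^ 2 - f j ^ 2) := by
  classical
  have hj : j ∈ univ.erase i := mem_erase.2 ⟨hij.symm, mem_univ j⟩
  have hcard : (#((univ.erase i).erase j) : ℝ) = Fintype.card ι - 2 := by
    rw [cast_card_erase_of_mem hj, cast_card_erase_of_mem (mem_univ i), card_univ]
    ring
  have hsum (g : ι → ℝ) : ∑ k ∈ (univ.erase i).erase j, g k = ∑ k, g k - g i - g j := by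
    rw [sum_erase_eq_sub hj, sum_erase_eq_sub (mem_univ i)]
  simpa only [hcard, hsum] using sq_sum_le_card_mul_sum_sq (s := (univ.erase i).erase j) (f := f)

theorem sum_sum_sub_sq_mul_sub_sum_sq_nonneg (f : ι → ℝ) :
    0 ≤ ∑ i, ∑ j,
      (f i - f j) ^ 2 * ((Fintype.card ι - 1) * (f i ^ 2 + f j ^ 2) - ∑ k, f k ^ 2) := by
  classical
  set g : ι → ι → ι → ℝ := fun i j k => (f i - f j) ^ 2 * (f i ^ 2 + f j ^ 2 - f k ^ 2)
  -- Dropping the terms `k = i` and `k = j` turns `card ι` into `card ι - 1` in the row sums.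
  set T : ι → ι → ι → ℝ := fun i j k => if k = i ∨ k = j then 0 else g i j k
  have hrow (i j : ι) : ∑ k, T i j k
      = (f i - f j) ^ 2 * ((Fintype.card ι - 1) * (f i ^ 2 + f j ^ 2) - ∑ k, f k ^ 2) := by
    by_cases hij : i = j
    · subst hij
      simp [T, g]
    have hT (k : ι) : T i j k
        = g i j k - (if k = i then g i j i else 0) - (if k = j then g i j j else 0) := by
      by_cases hki : k = i
      · subst hki; simp [T, hij, g]
      by_cases hkj : k = j
      · subst hkj; simp [T, hki, g]
      simp [T, hki, hkj]
    simp only [hT, sum_sub_distrib, sum_ite_eq', mem_univ, if_true, g, ← mul_sum, sum_const,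
      card_univ, nsmul_eq_mul]
    ring
  have hcyc (i j k : ι) : 0 ≤ T i j k + T i k j + T j k i := by
    by_cases hij : i = j
    · subst hij; simp [T, g]
    by_cases hik : i = k
    · subst hik; simp [T, g]
    by_cases hjk : j = k
    · subst hjk; simp [T, g]
    simpa [T, g, hij, hik, hjk, Ne.symm hij, Ne.symm hik, Ne.symm hjk]
      using cyclic_sq_sub_mul_sq_add_sq_sub_sq_nonneg (f i) (f j) (f k)
  simpa only [hrow] using sum_sum_sum_nonneg_of_cyclic T hcyc

theorem card_sub_one_mul_sum_sum_sq_le (hι : 2 ≤ Fintype.card ι) (f : ι → ℝ) :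
    (Fintype.card ι - 1) * ∑ i, ∑ j, ((f i - f j) * (f i + f j - ∑ k, f k)) ^ 2
      ≤ (Fintype.card ι - 2) ^ 2 * (∑ k, f k ^ 2) * ∑ i, ∑ j, (f i - f j) ^ 2 := by
  have hn : (2 : ℝ) ≤ Fintype.card ι := by exact_mod_cast hι
  set n : ℝ := (Fintype.card ι : ℝ)
  set s₂ := ∑ k, f k ^ 2
  set X := ∑ i, ∑ j, (f i - f j) ^ 2 * (s₂ - f i ^ 2 - f j ^ 2)
  have hCS : ∑ i, ∑ j, ((f i - f j) * (f i + f j - ∑ k, f k)) ^ 2 ≤ (n - 2) * X := by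
    rw [mul_sum]
    refine sum_le_sum fun i _ => ?_
    rw [mul_sum]
    refine sum_le_sum fun j _ => ?_
    by_cases hij : i = j
    · simp [hij]
    calc ((f i - f j) * (f i + f j - ∑ k, f k)) ^ 2
        = (f i - f j) ^ 2 * (∑ k, f k - f i - f j) ^ 2 := by ring
      _ ≤ (f i - f j) ^ 2 * ((n - 2) * (s₂ - f i ^ 2 - f j ^ 2)) :=
        mul_le_mul_of_nonneg_left (sq_sum_sub_sub_le hij f) (sq_nonneg _)
      _ = (n - 2) * ((f i - f j) ^ 2 * (s₂ - f i ^ 2 - f j ^ 2)) := by ring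
  have hSchur : (n - 1) * X ≤ (n - 2) * s₂ * ∑ i, ∑ j, (f i - f j) ^ 2 := by
    have hdiff : (n - 2) * s₂ * ∑ i, ∑ j, (f i - f j) ^ 2 - (n - 1) * X
        = ∑ i, ∑ j, (f i - f j) ^ 2 * ((n - 1) * (f i ^ 2 + f j ^ 2) - s₂) := by
      simp only [X, mul_sum, ← sum_sub_distrib]
      exact sum_congr rfl fun i _ => sum_congr rfl fun j _ => by ring
    linarith [sum_sum_sub_sq_mul_sub_sum_sq_nonneg f]
  calc (n - 1) * ∑ i, ∑ j, ((f i - f j) * (f i + f j - ∑ k, f k)) ^ 2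
      ≤ (n - 1) * ((n - 2) * X) := mul_le_mul_of_nonneg_left hCS (by linarith)
    _ = (n - 2) * ((n - 1) * X) := by ring
    _ ≤ (n - 2) * ((n - 2) * s₂ * ∑ i, ∑ j, (f i - f j) ^ 2) :=
      mul_le_mul_of_nonneg_left hSchur (by linarith)
    _ = (n - 2) ^ 2 * s₂ * ∑ i, ∑ j, (f i - f j) ^ 2 := by ring

end

/-- `(s₂ + α₀ᵀβ)² − n βᵀβ ≥ 0` for the specific vector `β`. -/
theorem stmt_4 (n : ℕ) (hn : 3 ≤ n) (h : Fin n → ℝ)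
    (s₁ s₂ : ℝ) (hs₁ : s₁ = ∑ i, h i) (hs₂ : s₂ = ∑ i, (h i) ^ 2)
    (β : Fin n → ℝ)
    (hβ : ∀ i, β i = (s₁ ^ 2 - s₂) / (2 * ((n : ℝ) - 1) * ((n : ℝ) - 2))
        - s₁ * h i / ((n : ℝ) - 2) + (h i) ^ 2 / ((n : ℝ) - 2)) :
    0 ≤ (s₂ + ∑ i, β i) ^ 2 - (n : ℝ) * ∑ i, (β i) ^ 2 := by
  have hn' : (3 : ℝ) ≤ n := by exact_mod_cast hn
  have hn₁ : (n : ℝ) - 1 ≠ 0 := by linarith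
  have hn₂ : (n : ℝ) - 2 ≠ 0 := by linarith
  have hsum : 2 * ((n : ℝ) - 1) * ∑ i, β i = s₂ - s₁ ^ 2 := by
    simp only [hβ, sum_add_distrib, sum_sub_distrib, sum_const, card_univ, Fintype.card_fin,
      nsmul_eq_mul, ← sum_div, ← mul_sum, ← hs₁, ← hs₂]
    field_simp
    ring
  have hdiff (i j : Fin n) : ((n : ℝ) - 2) * (β i - β j) = (h i - h j) * (h i + h j - s₁) := by
    rw [hβ, hβ]
    field_simp
    ring
  have hcore := card_sub_one_mul_sum_sum_sq_le (by rw [Fintype.card_fin]; omega) h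
  simp only [Fintype.card_fin, ← hs₁, ← hs₂, ← hdiff, mul_pow, ← mul_sum] at hcore
  have hvar : ((n : ℝ) - 1) * ∑ i, ∑ j, (β i - β j) ^ 2 ≤ s₂ * ∑ i, ∑ j, (h i - h j) ^ 2 := by
    refine le_of_mul_le_mul_left ?_ (pow_pos (by linarith : (0 : ℝ) < n - 2) 2)
    linear_combination hcore
  rw [sum_sum_sub_sq, sum_sum_sub_sq, Fintype.card_fin, ← hs₁, ← hs₂] at hvar
  refine nonneg_of_mul_nonneg_right ?_ (by linarith : (0 : ℝ) < 2 * ((n : ℝ) - 1))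
  linear_combination hvar - 2 * s₂ * hsum
end

section
/- Let n ≥ 4, 2 ≤ k ≤ n−2, and define φ_k(t) as the value of the symmetric degree-4 polynomial f(h₁,…,hₙ) = (s₂+α₀ᵀβ)² − nβᵀβ at h₁ = … = h_k = t, h_{k+1} = … = hₙ = 1. Then φ_k(t) = [k(n−k)(t−1)²/((n−1)(n−2)²)](a₁t² + b₁t + c₁) with a₁ = ((n−1)k−1)(n−1−k), b₁ = −2(k−1)(n−1−k)(n−1), c₁ = (k−1)((n−k)(n−1)−1), and φ_k(t) ≥ 0 for all t ∈ ℝ. -/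
/-!
At the point `h = (t,…,t,1,…,1)` every `hᵢ`, and hence every `βᵢ`, is one of two values, so each
sum over `i` is `k · (value at t) + (n − k) · (value at 1)`; after this reduction the factorisation
is an identity of rational functions in `n`, `k`, `t`. The quadratic factor has leading coefficient
`((n − 1)k − 1)(n − 1 − k) > 0` and discriminant `−4(k − 1)(n − 1 − k)(n − 2)²n ≤ 0`.
-/

open Finset

lemma Fin.sum_comp_eq_of_eq_ite {α : Type*} {n k : ℕ} (hk : k ≤ n) {h : Fin n → α} {t u : α}
    (hh : ∀ i, h i = if (i : ℕ) < k then t else u) (g : α → ℝ) :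
    ∑ i, g (h i) = k * g t + (n - k) * g u := by
  have hcompl : #{i : Fin n | ¬ (i : ℕ) < k} = n - k := by
    rw [filter_not, card_sdiff_of_subset (filter_subset _ _), Fin.card_filter_val_lt, card_univ,
      Fintype.card_fin, min_eq_right hk]
  simp only [hh, apply_ite g]
  rw [sum_ite, Finset.sum_const, Finset.sum_const, Fin.card_filter_val_lt, hcompl, min_eq_right hk,
    nsmul_eq_mul, nsmul_eq_mul, Nat.cast_sub hk]

theorem quadratic_nonneg_of_discrim_nonpos {K : Type*} [Field K] [LinearOrder K]
    [IsStrictOrderedRing K] {a b c : K} (ha : 0 < a) (h : discrim a b c ≤ 0) (x : K) :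
    0 ≤ a * (x * x) + b * x + c := by
  have key : 4 * a * (a * (x * x) + b * x + c) = (2 * a * x + b) ^ 2 - discrim a b c := by
    rw [discrim]; ring
  have : 0 ≤ 4 * a * (a * (x * x) + b * x + c) := by rw [key]; nlinarith [sq_nonneg (2 * a * x + b)]
  exact (mul_nonneg_iff_of_pos_left (by positivity)).mp this

noncomputable def betaEntry (n s₁ s₂ x : ℝ) : ℝ :=
  (s₁ ^ 2 - s₂) / (2 * (n - 1) * (n - 2)) - s₁ * x / (n - 2) + x ^ 2 / (n - 2)

theorem two_valued_phi_eq {N K : ℝ} (hN1 : N - 1 ≠ 0) (hN2 : N - 2 ≠ 0) (t : ℝ) :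
    let s₁ := K * t + (N - K)
    let s₂ := K * t ^ 2 + (N - K)
    (s₂ + (K * betaEntry N s₁ s₂ t + (N - K) * betaEntry N s₁ s₂ 1)) ^ 2
        - N * (K * betaEntry N s₁ s₂ t ^ 2 + (N - K) * betaEntry N s₁ s₂ 1 ^ 2)
      = K * (N - K) * (t - 1) ^ 2 / ((N - 1) * (N - 2) ^ 2)
        * (((N - 1) * K - 1) * (N - 1 - K) * t ^ 2 + -2 * (K - 1) * (N - 1 - K) * (N - 1) * t
          + (K - 1) * ((N - K) * (N - 1) - 1)) := by
  intro s₁ s₂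
  simp only [betaEntry, s₁, s₂]
  field_simp
  ring

theorem reduced_quadratic_nonneg {N K : ℝ} (hK : 1 ≤ K) (hKN : K + 2 ≤ N) (t : ℝ) :
    0 ≤ ((N - 1) * K - 1) * (N - 1 - K) * t ^ 2 + -2 * (K - 1) * (N - 1 - K) * (N - 1) * t
          + (K - 1) * ((N - K) * (N - 1) - 1) := by
  have hdiscrim : discrim (((N - 1) * K - 1) * (N - 1 - K)) (-2 * (K - 1) * (N - 1 - K) * (N - 1))
      ((K - 1) * ((N - K) * (N - 1) - 1)) = -(4 * (K - 1) * (N - 1 - K) * (N - 2) ^ 2 * N) := by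
    rw [discrim]; ring
  have hlead : 0 < ((N - 1) * K - 1) * (N - 1 - K) := by
    apply mul_pos <;> nlinarith
  have := quadratic_nonneg_of_discrim_nonpos hlead (by
    rw [hdiscrim, neg_nonpos]
    have : 0 ≤ K - 1 := by linarith
    have : 0 ≤ N - 1 - K := by linarith
    have : 0 ≤ N := by linarith
    positivity) t
  rwa [← sq] at this

theorem stmt_7_general (n k : ℕ) (hk2 : 2 ≤ k) (hk : k ≤ n - 2) (t : ℝ)
    (h : Fin n → ℝ) (hhdef : ∀ i : Fin n, h i = if (i : ℕ) < k then t else 1)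
    (s₁ s₂ : ℝ) (hs₁ : s₁ = ∑ i, h i) (hs₂ : s₂ = ∑ i, (h i) ^ 2)
    (β : Fin n → ℝ)
    (hβ : ∀ i, β i = (s₁ ^ 2 - s₂) / (2 * ((n : ℝ) - 1) * ((n : ℝ) - 2))
        - s₁ * h i / ((n : ℝ) - 2) + (h i) ^ 2 / ((n : ℝ) - 2))
    (φ : ℝ) (hφ : φ = (s₂ + ∑ i, β i) ^ 2 - (n : ℝ) * ∑ i, (β i) ^ 2)
    (a₁ b₁ c₁ : ℝ)
    (ha : a₁ = (((n : ℝ) - 1) * (k : ℝ) - 1) * ((n : ℝ) - 1 - (k : ℝ)))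
    (hb : b₁ = -2 * ((k : ℝ) - 1) * ((n : ℝ) - 1 - (k : ℝ)) * ((n : ℝ) - 1))
    (hc : c₁ = ((k : ℝ) - 1) * (((n : ℝ) - (k : ℝ)) * ((n : ℝ) - 1) - 1)) :
    φ = (k : ℝ) * ((n : ℝ) - (k : ℝ)) * (t - 1) ^ 2 /
          (((n : ℝ) - 1) * ((n : ℝ) - 2) ^ 2) * (a₁ * t ^ 2 + b₁ * t + c₁)
    ∧ 0 ≤ φ := by
  have hkn : (k : ℝ) + 2 ≤ n := by exact_mod_cast (by omega : k + 2 ≤ n)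
  have hk1 : (1 : ℝ) ≤ k := by exact_mod_cast (by omega : 1 ≤ k)
  have hsum := Fin.sum_comp_eq_of_eq_ite (by omega : k ≤ n) hhdef
  have hs₁' : s₁ = k * t + (n - k) := hs₁.trans ((hsum fun x ↦ x).trans (by ring))
  have hs₂' : s₂ = k * t ^ 2 + (n - k) := hs₂.trans ((hsum (· ^ 2)).trans (by ring))
  have hβ' : β = fun i ↦ betaEntry n s₁ s₂ (h i) := funext hβ
  have hφ' : φ = (k : ℝ) * ((n : ℝ) - (k : ℝ)) * (t - 1) ^ 2 /
      (((n : ℝ) - 1) * ((n : ℝ) - 2) ^ 2) * (a₁ * t ^ 2 + b₁ * t + c₁) := by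
    rw [hφ, hβ', hsum, hsum (betaEntry n s₁ s₂ · ^ 2), hs₁', hs₂', ha, hb, hc]
    exact two_valued_phi_eq (by linarith) (by linarith) t
  refine ⟨hφ', ?_⟩
  rw [hφ', ha, hb, hc]
  refine mul_nonneg (div_nonneg ?_ ?_) (reduced_quadratic_nonneg hk1 hkn t)
  · exact mul_nonneg (mul_nonneg (by linarith) (by linarith)) (sq_nonneg _)
  · exact mul_nonneg (by linarith) (sq_nonneg _)

/-- The reduction `φ_k(t)` of `f = (s₂+α₀ᵀβ)² − nβᵀβ` factors as stated and is nonnegative. -/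
theorem stmt_7 (n k : ℕ) (hn : 4 ≤ n) (hk2 : 2 ≤ k) (hk : k ≤ n - 2) (t : ℝ)
    (h : Fin n → ℝ) (hhdef : ∀ i : Fin n, h i = if (i : ℕ) < k then t else 1)
    (s₁ s₂ : ℝ) (hs₁ : s₁ = ∑ i, h i) (hs₂ : s₂ = ∑ i, (h i) ^ 2)
    (β : Fin n → ℝ)
    (hβ : ∀ i, β i = (s₁ ^ 2 - s₂) / (2 * ((n : ℝ) - 1) * ((n : ℝ) - 2))
        - s₁ * h i / ((n : ℝ) - 2) + (h i) ^ 2 / ((n : ℝ) - 2))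
    (φ : ℝ) (hφ : φ = (s₂ + ∑ i, β i) ^ 2 - (n : ℝ) * ∑ i, (β i) ^ 2)
    (a₁ b₁ c₁ : ℝ)
    (ha : a₁ = (((n : ℝ) - 1) * (k : ℝ) - 1) * ((n : ℝ) - 1 - (k : ℝ)))
    (hb : b₁ = -2 * ((k : ℝ) - 1) * ((n : ℝ) - 1 - (k : ℝ)) * ((n : ℝ) - 1))
    (hc : c₁ = ((k : ℝ) - 1) * (((n : ℝ) - (k : ℝ)) * ((n : ℝ) - 1) - 1)) :
    φ = (k : ℝ) * ((n : ℝ) - (k : ℝ)) * (t - 1) ^ 2 /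
          (((n : ℝ) - 1) * ((n : ℝ) - 2) ^ 2) * (a₁ * t ^ 2 + b₁ * t + c₁)
    ∧ 0 ≤ φ :=
  stmt_7_general n k hk2 hk t h hhdef s₁ s₂ hs₁ hs₂ β hβ φ hφ a₁ b₁ c₁ ha hb hc
end

section
/- Let n ≥ 2, s₂ ≥ 0, α₀ = (1,…,1)ᵀ ∈ ℝⁿ, and β ∈ ℝⁿ. Suppose s₂ + α₀ᵀβ ≥ 0 and (s₂ + α₀ᵀβ)² − nβᵀβ ≥ 0. Then the symmetric matrix B = s₂Iₙ + α₀βᵀ + βα₀ᵀ is positive semidefinite; i.e., γᵀBγ ≥ 0 for all γ ∈ ℝⁿ. -/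
/-!
The eigenvalues of `uvᵀ + vuᵀ` on `span {u, v}` are `⟪u, v⟫ ± ‖u‖‖v‖` and it vanishes on the
orthogonal complement, so `s • 1 + uvᵀ + vuᵀ` is positive semidefinite as soon as
`‖u‖‖v‖ ≤ s + ⟪u, v⟫`. For `u = (1, …, 1)` and `v = β` this condition reads
`0 ≤ s₂ + ∑ β` and `n ∑ β² ≤ (s₂ + ∑ β)²`.
-/

open Matrix RealInnerProductSpace

section InnerProductSpace

variable {E : Type*} [NormedAddCommGroup E] [InnerProductSpace ℝ E]

/-- The smallest eigenvalue of `uvᵀ + vuᵀ` is `⟪u, v⟫ - ‖u‖‖v‖`. -/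
theorem inner_sub_norm_mul_norm_mul_sq_le (u v x : E) :
    (⟪u, v⟫ - ‖u‖ * ‖v‖) * ‖x‖ ^ 2 ≤ 2 * ⟪u, x⟫ * ⟪v, x⟫ := by
  -- `w` is `‖x‖²` times the reflection of `v` in the hyperplane `x⊥`, so `‖w‖ = ‖x‖² ‖v‖`.
  set w : E := ‖x‖ ^ 2 • v - (2 * ⟪v, x⟫) • x
  have hw_sq : ‖w‖ ^ 2 = (‖x‖ ^ 2 * ‖v‖) ^ 2 := by
    rw [← real_inner_self_eq_norm_sq]
    simp only [w, inner_sub_left, inner_sub_right, real_inner_smul_left, real_inner_smul_right,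
      real_inner_comm x v]
    simp only [real_inner_self_eq_norm_sq]
    ring
  have hw : ‖w‖ = ‖x‖ ^ 2 * ‖v‖ :=
    (pow_left_inj₀ (norm_nonneg _) (by positivity) two_ne_zero).mp hw_sq
  have hinner : ⟪u, w⟫ = ‖x‖ ^ 2 * ⟪u, v⟫ - 2 * ⟪u, x⟫ * ⟪v, x⟫ := by
    simp only [w, inner_sub_right, real_inner_smul_right]
    ring
  have := real_inner_le_norm u w
  rw [hinner, hw] at this
  linarith

theorem quadForm_nonneg_of_norm_mul_norm_le {s : ℝ} {u v : E} (h : ‖u‖ * ‖v‖ ≤ s + ⟪u, v⟫)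
    (x : E) : 0 ≤ s * ‖x‖ ^ 2 + 2 * ⟪u, x⟫ * ⟪v, x⟫ := by
  linear_combination mul_nonneg (sub_nonneg.2 h) (sq_nonneg ‖x‖)
    + inner_sub_norm_mul_norm_mul_sq_le u v x

end InnerProductSpace

theorem dotProduct_smul_one_add_vecMulVec_add_vecMulVec_mulVec {ι R : Type*} [Fintype ι]
    [DecidableEq ι] [CommRing R] (s : R) (u v x : ι → R) :
    x ⬝ᵥ ((s • (1 : Matrix ι ι R) + vecMulVec u v + vecMulVec v u) *ᵥ x)
      = s * (x ⬝ᵥ x) + 2 * (u ⬝ᵥ x) * (v ⬝ᵥ x) := by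
  simp only [add_mulVec, smul_mulVec, one_mulVec, vecMulVec_mulVec, dotProduct_add,
    dotProduct_smul, op_smul_eq_smul, smul_eq_mul, dotProduct_comm _ x]
  ring

theorem quadForm_smul_one_add_vecMulVec_add_vecMulVec_nonneg {ι : Type*} [Fintype ι]
    [DecidableEq ι] {s : ℝ} {u v : ι → ℝ} (h₀ : 0 ≤ s + u ⬝ᵥ v)
    (h : (u ⬝ᵥ u) * (v ⬝ᵥ v) ≤ (s + u ⬝ᵥ v) ^ 2) (x : ι → ℝ) :
    0 ≤ x ⬝ᵥ ((s • (1 : Matrix ι ι ℝ) + vecMulVec u v + vecMulVec v u) *ᵥ x) := by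
  have hinner (a b : ι → ℝ) : ⟪WithLp.toLp 2 a, WithLp.toLp 2 b⟫ = a ⬝ᵥ b := by
    rw [EuclideanSpace.inner_toLp_toLp, star_trivial, dotProduct_comm]
  have hnorm_sq (a : ι → ℝ) : ‖WithLp.toLp 2 a‖ ^ 2 = a ⬝ᵥ a := by
    rw [← real_inner_self_eq_norm_sq, hinner]
  have hnorm :
      ‖WithLp.toLp 2 u‖ * ‖WithLp.toLp 2 v‖ ≤ s + ⟪WithLp.toLp 2 u, WithLp.toLp 2 v⟫ := by
    rwa [hinner, ← pow_le_pow_iff_left₀ (by positivity) h₀ two_ne_zero, mul_pow, hnorm_sq,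
      hnorm_sq]
  have hx := quadForm_nonneg_of_norm_mul_norm_le hnorm (WithLp.toLp 2 x)
  rwa [hnorm_sq, hinner, hinner, ← dotProduct_smul_one_add_vecMulVec_add_vecMulVec_mulVec] at hx

theorem stmt_10_general (n : ℕ) (s₂ : ℝ)
    (β : Fin n → ℝ)
    (α₀ : Fin n → ℝ) (hα₀ : α₀ = fun _ => 1)
    (h₁ : 0 ≤ s₂ + ∑ i, β i)
    (h₂ : 0 ≤ (s₂ + ∑ i, β i) ^ 2 - (n : ℝ) * ∑ i, (β i) ^ 2)
    (B : Matrix (Fin n) (Fin n) ℝ)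
    (hB : B = s₂ • (1 : Matrix (Fin n) (Fin n) ℝ)
        + Matrix.vecMulVec α₀ β + Matrix.vecMulVec β α₀) :
    ∀ γ : Fin n → ℝ, 0 ≤ γ ⬝ᵥ (B.mulVec γ) := by
  subst hα₀ hB
  have hsum : (fun _ => 1) ⬝ᵥ β = ∑ i, β i := by simp [dotProduct]
  refine quadForm_smul_one_add_vecMulVec_add_vecMulVec_nonneg (by rwa [hsum]) ?_
  rw [hsum]
  simpa [dotProduct, sq] using h₂

/-- Positive semidefiniteness of `B = s₂Iₙ + α₀βᵀ + βα₀ᵀ` under the eigenvalue conditions. -/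
theorem stmt_10 (n : ℕ) (hn : 2 ≤ n) (s₂ : ℝ) (hs₂ : 0 ≤ s₂)
    (β : Fin n → ℝ)
    (α₀ : Fin n → ℝ) (hα₀ : α₀ = fun _ => 1)
    (h₁ : 0 ≤ s₂ + ∑ i, β i)
    (h₂ : 0 ≤ (s₂ + ∑ i, β i) ^ 2 - (n : ℝ) * ∑ i, (β i) ^ 2)
    (B : Matrix (Fin n) (Fin n) ℝ)
    (hB : B = s₂ • (1 : Matrix (Fin n) (Fin n) ℝ)
        + Matrix.vecMulVec α₀ β + Matrix.vecMulVec β α₀) :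
    ∀ γ : Fin n → ℝ, 0 ≤ γ ⬝ᵥ (B.mulVec γ) :=
  stmt_10_general n s₂ β α₀ hα₀ h₁ h₂ B hB
end
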